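/- Let U ⊆ ℝ² be open, Γ a torsion-free affine connection on U, f : U → ℝ smooth, and define the projectively changed connection Γ̂^k_{ij} = Γ^k_{ij} + δ^k_i ∂_j f + δ^k_j ∂_i f. Let g_W and ĝ_W be the Walker metrics on U×ℝ² of Γ and Γ̂ respectively. Then the diffeomorphism Φ : U×ℝ² → U×ℝ², Φ(x,ξ) = (x, e^{2f(x)}ξ), satisfies Φ*ĝ_W = e^{2f} g_W, i.e. for every p = (x,ξ) ∈ U×ℝ², (DΦ(p))ᵀ · ĝ_W(Φ(p)) · DΦ(p) = e^{2f(x)} g_W(p) as symmetric 4×4 matrices. In other words, projective rescalings on the base correspond to conformal rescalings of the Walker lift. -/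
import Mathlib


noncomputable section
open Matrix

/-- Points of the plane. -/
abbrev Pt2 : Type := Fin 2 → ℝ
/-- Points of the 4-manifold `U × ℝ²`, coordinates `(x¹, x², ξ₁, ξ₂)`. -/
abbrev Pt4 : Type := Fin 4 → ℝ

/-- Partial derivative of a function on the plane. -/
def pd2 (i : Fin 2) (f : Pt2 → ℝ) (x : Pt2) : ℝ := fderiv ℝ f x (Pi.single i 1)

/-- Base point `(x¹,x²)` of a point of `U × ℝ²`. -/
def bpt (p : Pt4) : Pt2 := ![p 0, p 1]
/-- Fibre coordinates `(ξ₁,ξ₂)` of a point of `U × ℝ²`. -/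
def fib (p : Pt4) : Fin 2 → ℝ := ![p 2, p 3]

/-- An affine connection: `conn k i j` is the Christoffel symbol `Γ^k_{ij}`. -/
abbrev Conn : Type := Fin 2 → Fin 2 → Fin 2 → Pt2 → ℝ

/-- The projectively changed connection `Γ̂^k_{ij} = Γ^k_{ij} + δ^k_i Υ_j + δ^k_j Υ_i`. -/
def projChange (Γ : Conn) (Υ : Fin 2 → Pt2 → ℝ) : Conn :=
  fun k i j x => Γ k i j x + (if k = i then Υ j x else 0) + (if k = j then Υ i x else 0)

/-- The Walker metric `g_W = dξ_i⊙dx^i − Γ^k_{ij}ξ_k dx^i⊙dx^j` of a connection, as a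
symmetric `4×4` matrix in the coordinates `(x¹,x²,ξ₁,ξ₂)`. -/
def walker (Γ : Conn) (p : Pt4) : Matrix (Fin 4) (Fin 4) ℝ :=
  let A : Fin 2 → Fin 2 → ℝ := fun i j => -(∑ k, Γ k i j (bpt p) * fib p k)
  !![A 0 0, A 0 1, 1/2, 0;
     A 1 0, A 1 1, 0, 1/2;
     1/2, 0, 0, 0;
     0, 1/2, 0, 0]

/-- The fibre rescaling `Φ(x,ξ) = (x, e^{2f(x)}ξ)`. -/
def rescale (f : Pt2 → ℝ) (p : Pt4) : Pt4 :=
  ![p 0, p 1, Real.exp (2 * f (bpt p)) * p 2, Real.exp (2 * f (bpt p)) * p 3]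

/-- The Jacobian matrix `DΦ` of `Φ(x,ξ) = (x, e^{2f(x)}ξ)` in coordinates `(x¹,x²,ξ₁,ξ₂)`. -/
def rescaleD (f : Pt2 → ℝ) (p : Pt4) : Matrix (Fin 4) (Fin 4) ℝ :=
  let E : ℝ := Real.exp (2 * f (bpt p))
  !![1, 0, 0, 0;
     0, 1, 0, 0;
     2 * E * p 2 * pd2 0 f (bpt p), 2 * E * p 2 * pd2 1 f (bpt p), E, 0;
     2 * E * p 3 * pd2 0 f (bpt p), 2 * E * p 3 * pd2 1 f (bpt p), 0, E]

/-- Projective rescalings on the base correspond to conformal rescalings of the Walker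
lift: for `Γ̂^k_{ij} = Γ^k_{ij} + δ^k_i ∂_j f + δ^k_j ∂_i f`, the map
`Φ(x,ξ) = (x, e^{2f}ξ)` satisfies `Φ*ĝ_W = e^{2f} g_W`. -/
theorem walker_conformal_of_projective_rescaling
    (U : Set Pt2) (hUopen : IsOpen U)
    (Γ : Conn) (hΓsmooth : ∀ k i j, ContDiffOn ℝ (⊤ : ℕ∞) (Γ k i j) U)
    (hΓsym : ∀ k i j, ∀ x ∈ U, Γ k i j x = Γ k j i x)
    (f : Pt2 → ℝ) (hfsmooth : ContDiffOn ℝ (⊤ : ℕ∞) f U)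
    (p : Pt4) (hp : bpt p ∈ U) :
    (rescaleD f p)ᵀ
        * walker (projChange Γ (fun i x => pd2 i f x)) (rescale f p)
        * rescaleD f p
      = Real.exp (2 * f (bpt p)) • walker Γ p := by
  have hb : bpt (rescale f p) = bpt p := by
    funext i; fin_cases i <;> simp [bpt, rescale]
  have hf : fib (rescale f p) = fun k => Real.exp (2 * f (bpt p)) * fib p k := by
    funext k; fin_cases k <;> simp [fib, rescale, bpt]
  ext i j
  fin_cases i <;> fin_cases j <;>
    simp [walker, rescaleD, rescale, projChange, hb, hf, bpt, fib, mul_apply,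
      Fin.sum_univ_succ, Matrix.smul_apply, Matrix.vecHead, Matrix.vecTail] <;> ring
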